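/- arXiv:1102.2038 — 2 statements merged into one kernel-verified Lean document; each statement's English description precedes it below -/
import Mathlib

section
/- Let f(x₀,r) be a scalar-valued infinitely differentiable function on an open subset of ℝ² (variables x₀ and r, with r > 0). Then for every integer m ≥ 1, D_r(m){∂_r f} − ∂_r D^r(m){f} = (2m/r) · D^r(m){f}. -/
noncomputable section

/-- Partial derivative with respect to the second variable `r` of a function on `ℝ²`. -/
def pr2 (g : ℝ × ℝ → ℝ) (p : ℝ × ℝ) : ℝ := fderiv ℝ g p (0, 1)

/-- The operator `D_r(m) = ((1/r) ∂_r)^m`. -/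
def DrOp : ℕ → (ℝ × ℝ → ℝ) → (ℝ × ℝ → ℝ)
  | 0, f => f
  | m + 1, f => fun p => (1 / p.2) * pr2 (DrOp m f) p

/-- The operator `D^r(m)`, defined by `D^r(0){f} = f` and `D^r(m){f} = ∂_r (D^r(m-1){f} / r)`. -/
def DRop : ℕ → (ℝ × ℝ → ℝ) → (ℝ × ℝ → ℝ)
  | 0, f => f
  | m + 1, f => fun p => pr2 (fun q => DRop m f q / q.2) p

/-!
Write `B = D^r(m){f}` and `C = B / r`, so that `D^r(m+1){f} = ∂_r C` and `B = r C`. By induction,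
`D_r(m){∂_r f} = ∂_r B + 2m C`. Applying `(1/r) ∂_r` and using `∂_r² (r C) = 2 ∂_r C + r ∂_r² C`
gives `D_r(m+1){∂_r f} = ∂_r² C + (2(m+1)/r) ∂_r C`, which is the claim for `m + 1`.
-/

open Set
open scoped ContDiff

variable {U : Set (ℝ × ℝ)} {g g₁ g₂ : ℝ × ℝ → ℝ} {p : ℝ × ℝ}

theorem Set.EqOn.pr2 (hU : IsOpen U) (h : EqOn g₁ g₂ U) : EqOn (pr2 g₁) (pr2 g₂) U :=
  fun _ hq => by
    simp only [_root_.pr2, Filter.EventuallyEq.fderiv_eq (Filter.eventually_of_mem (hU.mem_nhds hq) h)]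

theorem ContDiffOn.pr2 (hU : IsOpen U) (hg : ContDiffOn ℝ ∞ g U) : ContDiffOn ℝ ∞ (pr2 g) U :=
  (hg.fderiv_of_isOpen hU (by simp)).clm_apply contDiffOn_const

theorem ContDiffOn.differentiableAt_of_isOpen (hU : IsOpen U) (hg : ContDiffOn ℝ ∞ g U)
    (hp : p ∈ U) : DifferentiableAt ℝ g p :=
  (hg.differentiableOn (by simp)).differentiableAt (hU.mem_nhds hp)

theorem pr2_add (h₁ : DifferentiableAt ℝ g₁ p) (h₂ : DifferentiableAt ℝ g₂ p) :
    pr2 (fun q => g₁ q + g₂ q) p = pr2 g₁ p + pr2 g₂ p := by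
  simp only [pr2, fderiv_fun_add h₁ h₂, add_apply]

theorem pr2_const_mul (h : DifferentiableAt ℝ g p) (c : ℝ) :
    pr2 (fun q => c * g q) p = c * pr2 g p := by
  simp only [pr2, fderiv_const_mul h c, smul_apply, smul_eq_mul]

theorem pr2_snd_mul (h : DifferentiableAt ℝ g p) :
    pr2 (fun q => q.2 * g q) p = g p + p.2 * pr2 g p := by
  simp only [pr2, fderiv_fun_mul differentiableAt_snd h, fderiv_snd, add_apply, smul_apply,
    smul_eq_mul, ContinuousLinearMap.coe_snd', mul_one]
  ring

theorem pr2_pr2_snd_mul (hU : IsOpen U) (hg : ContDiffOn ℝ ∞ g U) (hp : p ∈ U) :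
    pr2 (pr2 fun q => q.2 * g q) p = 2 * pr2 g p + p.2 * pr2 (pr2 g) p := by
  have hg' := hg.pr2 hU
  have hfirst : EqOn (pr2 fun q => q.2 * g q) (fun q => g q + q.2 * pr2 g q) U :=
    fun q hq => pr2_snd_mul (hg.differentiableAt_of_isOpen hU hq)
  rw [hfirst.pr2 hU hp, pr2_add (hg.differentiableAt_of_isOpen hU hp)
    (differentiableAt_snd.fun_mul (hg'.differentiableAt_of_isOpen hU hp)),
    pr2_snd_mul (hg'.differentiableAt_of_isOpen hU hp)]
  ring

variable {f : ℝ × ℝ → ℝ}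

theorem ContDiffOn.div_snd (hU0 : ∀ q ∈ U, q.2 ≠ 0) (hg : ContDiffOn ℝ ∞ g U) :
    ContDiffOn ℝ ∞ (fun q => g q / q.2) U :=
  hg.div contDiff_snd.contDiffOn hU0

theorem ContDiffOn.DRop (hU : IsOpen U) (hU0 : ∀ q ∈ U, q.2 ≠ 0)
    (hf : ContDiffOn ℝ ∞ f U) (m : ℕ) : ContDiffOn ℝ ∞ (DRop m f) U := by
  induction m with
  | zero => exact hf
  | succ m ih => exact (ih.div_snd hU0).pr2 hU

theorem DrOp_pr2_eqOn (hU : IsOpen U) (hU0 : ∀ q ∈ U, q.2 ≠ 0)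
    (hf : ContDiffOn ℝ ∞ f U) (m : ℕ) :
    EqOn (DrOp m (pr2 f)) (fun p => pr2 (DRop m f) p + 2 * m * (DRop m f p / p.2)) U := by
  induction m with
  | zero => intro p _; simp [DrOp, DRop]
  | succ m ih =>
    intro p hp
    set B := DRop m f
    set C := fun q : ℝ × ℝ => B q / q.2
    have hB : ContDiffOn ℝ ∞ B U := hf.DRop hU hU0 m
    have hC : ContDiffOn ℝ ∞ C U := hB.div_snd hU0
    have hBC : EqOn B (fun q => q.2 * C q) U := fun q hq => by
      simp only [C]; field_simp [hU0 q hq]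
    have hpr2B : pr2 (pr2 B) p = 2 * pr2 C p + p.2 * pr2 (pr2 C) p := by
      rw [(hBC.pr2 hU).pr2 hU hp, pr2_pr2_snd_mul hU hC hp]
    have hstep : pr2 (DrOp m (pr2 f)) p = pr2 (pr2 B) p + 2 * m * pr2 C p := by
      rw [ih.pr2 hU hp, pr2_add ((hB.pr2 hU).differentiableAt_of_isOpen hU hp)
        ((hC.differentiableAt_of_isOpen hU hp).const_mul _),
        pr2_const_mul (hC.differentiableAt_of_isOpen hU hp)]
    change 1 / p.2 * pr2 (DrOp m (pr2 f)) p = pr2 (pr2 C) p + 2 * ↑(m + 1) * (pr2 C p / p.2)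
    rw [hstep, hpr2B]
    field_simp [hU0 p hp]
    push_cast
    ring

theorem DrOp_partial_r_sub_general (f : ℝ × ℝ → ℝ) (U : Set (ℝ × ℝ)) (hU : IsOpen U)
    (hUpos : U ⊆ {p : ℝ × ℝ | 0 < p.2}) (hf : ContDiffOn ℝ (⊤ : ℕ∞) f U)
    (m : ℕ) :
    ∀ p ∈ U, DrOp m (fun q => pr2 f q) p - pr2 (DRop m f) p
      = (2 * (m : ℝ) / p.2) * DRop m f p := by
  intro p hp
  rw [DrOp_pr2_eqOn hU (fun q hq => (hUpos hq).ne') hf m hp]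
  ring

/-- Lemma 3.1 (iv): `D_r(m){∂_r f} − ∂_r D^r(m){f} = (2m/r) · D^r(m){f}`. -/
theorem DrOp_partial_r_sub (f : ℝ × ℝ → ℝ) (U : Set (ℝ × ℝ)) (hU : IsOpen U)
    (hUpos : U ⊆ {p : ℝ × ℝ | 0 < p.2}) (hf : ContDiffOn ℝ (⊤ : ℕ∞) f U)
    (m : ℕ) (hm : 1 ≤ m) :
    ∀ p ∈ U, DrOp m (fun q => pr2 f q) p - pr2 (DRop m f) p
      = (2 * (m : ℝ) / p.2) * DRop m f p :=
  DrOp_partial_r_sub_general f U hU hUpos hf m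
end
end

section
/- Let k ∈ ℕ and let P_n be a homogeneous Dunkl-monogenic polynomial of degree n on ℝ^d with values in ℝ_{0,d}. Then D̲(x̲^k P_n(x̲)) = −k x̲^{k−1} P_n(x̲) if k is even, and D̲(x̲^k P_n(x̲)) = −(k + μ + 2n − 1) x̲^{k−1} P_n(x̲) if k is odd, where x̲^k denotes the k-th power of the Clifford vector x̲ inside ℝ_{0,d}. -/
open scoped BigOperators RealInnerProductSpace

noncomputable section

/-- Euclidean space `ℝ^d`. -/
abbrev Vd (d : ℕ) := EuclideanSpace ℝ (Fin d)

/-- The reflection `σ_a x = x − 2(⟪a,x⟫/|a|²) a` in the hyperplane orthogonal to `a`. -/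
def reflect {d : ℕ} (a x : Vd d) : Vd d := x - ((2 * ⟪a, x⟫) / ⟪a, a⟫) • a

/-- A finite root system `R` with a choice of positive subsystem `Rp` and a `W`-invariant
multiplicity function `kap`. -/
structure DunklData (d : ℕ) where
  R : Finset (Vd d)
  Rp : Finset (Vd d)
  kap : Vd d → ℝ
  zero_not_mem : (0 : Vd d) ∉ R
  inter_line : ∀ a ∈ R, ∀ c : ℝ, c • a ∈ R → c = 1 ∨ c = -1
  reflect_mem : ∀ a ∈ R, ∀ b ∈ R, reflect a b ∈ R
  Rp_subset : Rp ⊆ R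
  pos_split : ∀ a ∈ R, Xor' (a ∈ Rp) (-a ∈ Rp)
  kap_nonneg : ∀ a ∈ R, 0 ≤ kap a
  kap_invariant : ∀ a ∈ R, ∀ b ∈ R, kap (reflect a b) = kap b

/-- The index `γ_κ = Σ_{α ∈ R₊} κ(α)`. -/
def gam {d : ℕ} (S : DunklData d) : ℝ := ∑ a ∈ S.Rp, S.kap a

/-- The Dunkl dimension `μ = 2γ_κ + d`. -/
def dunklDim {d : ℕ} (S : DunklData d) : ℝ := 2 * gam S + d

variable {d : ℕ} {A : Type*} [NormedRing A] [NormedAlgebra ℝ A]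

/-- The Clifford algebra relations `e_i e_j + e_j e_i = −2δ_{ij}` for the generators of
`ℝ_{0,d}`, together with linear independence of the basis products `e_A`. -/
def CliffordRel (e : Fin d → A) : Prop :=
  (∀ i j, e i * e j + e j * e i = if i = j then (-2 : A) else 0) ∧
    LinearIndependent ℝ (fun s : Finset (Fin d) => ((s.sort (· ≤ ·)).map e).prod)

/-- The Clifford vector `x̲ = Σ x_i e_i` associated to `x ∈ ℝ^d`. -/
def vecC (e : Fin d → A) (x : Vd d) : A := ∑ i, x i • e i

/-- The Dunkl difference quotient `(f(x) − f(σ_a x)) / ⟪a, x⟫`, extended by continuity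
(for differentiable `f`) across the hyperplane `⟪a, x⟫ = 0`. -/
def dQuot (a : Vd d) (f : Vd d → A) (x : Vd d) : A :=
  if ⟪a, x⟫ = 0 then (2 / ⟪a, a⟫) • fderiv ℝ f x a
  else (⟪a, x⟫)⁻¹ • (f x - f (reflect a x))

/-- The Dunkl operator `T_{x_i}` on `ℝ^d`. -/
def dunklT (S : DunklData d) (i : Fin d) (f : Vd d → A) (x : Vd d) : A :=
  fderiv ℝ f x (EuclideanSpace.single i 1) + ∑ a ∈ S.Rp, (S.kap a * a i) • dQuot a f x

/-- The Dunkl-Dirac operator `D̲ = Σ e_i T_{x_i}` on `ℝ^d`. -/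
def diracD (e : Fin d → A) (S : DunklData d) (f : Vd d → A) (x : Vd d) : A :=
  ∑ i, e i * dunklT S i f x


/-!
The key identity is the Leibniz rule `D̲(x̲ f) = −μ f − 2 E f − x̲ D̲ f`, where `E f = f'(x) x` is
the Euler operator. It follows from the anticommutator `e_i x̲ + x̲ e_i = −2 x_i`, the identity
`Σ_i x_i T_i f = E f + Σ_{α ∈ R₊} κ(α) (f − f ∘ σ_α)`, and the reflection terms: since
`x̲ − (σ_α x)̲ = (2⟨α,x⟩/|α|²) α̲` and `α̲² = −|α|²`, they contribute `−2 Σ κ(α) f ∘ σ_α`,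
which cancels the `f ∘ σ_α` part of the previous sum. As `x̲^k P_n` is homogeneous of degree
`k + n`, Euler's identity turns this into the recursion `c_{k+1} = −μ − 2(k + n) − c_k` for the
coefficients in `D̲(x̲^k P_n) = c_k x̲^{k−1} P_n`, and `c_0 = 0` because `P_n` is Dunkl-monogenic.
-/

open Finset

lemma DunklData.inner_self_ne_zero_of_mem_Rp (S : DunklData d) {a : Vd d} (ha : a ∈ S.Rp) :
    ⟪a, a⟫ ≠ 0 :=
  inner_self_ne_zero.mpr fun h => S.zero_not_mem (h ▸ S.Rp_subset ha)

lemma real_inner_eq_sum (a x : Vd d) : ⟪a, x⟫ = ∑ i, a i * x i := by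
  simp [PiLp.inner_apply, mul_comm]

def vecCL (e : Fin d → A) : Vd d →L[ℝ] A :=
  ∑ i, (EuclideanSpace.proj i : Vd d →L[ℝ] ℝ).smulRight (e i)

lemma vecCL_apply (e : Fin d → A) (x : Vd d) : vecCL e x = vecC e x := by
  simp [vecCL, vecC]

lemma vecC_smul (e : Fin d → A) (c : ℝ) (x : Vd d) : vecC e (c • x) = c • vecC e x := by
  simp only [← vecCL_apply, map_smul]

lemma vecC_sub (e : Fin d → A) (x y : Vd d) : vecC e (x - y) = vecC e x - vecC e y := by
  simp only [← vecCL_apply, map_sub]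

lemma vecC_single (e : Fin d → A) (i : Fin d) : vecC e (EuclideanSpace.single i 1) = e i := by
  simp [vecC, PiLp.single_apply]

lemma vecC_reflect (e : Fin d → A) (a x : Vd d) :
    vecC e (reflect a x) = vecC e x - (2 * ⟪a, x⟫ / ⟪a, a⟫) • vecC e a := by
  rw [reflect, vecC_sub, vecC_smul]

lemma hasFDerivAt_vecC (e : Fin d → A) (x : Vd d) : HasFDerivAt (vecC e) (vecCL e) x := by
  convert (vecCL e).hasFDerivAt using 1
  exact funext fun y => (vecCL_apply e y).symm

section Clifford

variable {e : Fin d → A}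

lemma gen_mul_self (he : ∀ i j, e i * e j + e j * e i = if i = j then (-2 : A) else 0)
    (i : Fin d) : e i * e i = -1 := by
  have h : (2 : ℝ) • (e i * e i) = (2 : ℝ) • (-1 : A) := by
    rw [two_smul, two_smul, he i i, if_pos rfl]
    norm_num
  exact smul_right_injective A two_ne_zero h

lemma gen_mul_vecC_add_vecC_mul (he : ∀ i j, e i * e j + e j * e i = if i = j then (-2 : A) else 0)
    (i : Fin d) (x : Vd d) : e i * vecC e x + vecC e x * e i = (-2 * x i) • 1 := by
  simp only [vecC, mul_sum, sum_mul, mul_smul_comm, smul_mul_assoc, ← sum_add_distrib, ← smul_add,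
    he, smul_ite, smul_zero, sum_ite_eq, mem_univ, if_true]
  rw [mul_comm, mul_smul, neg_smul, ← Algebra.algebraMap_eq_smul_one, map_ofNat]

lemma vecC_mul_add_vecC_mul (he : ∀ i j, e i * e j + e j * e i = if i = j then (-2 : A) else 0)
    (a x : Vd d) : vecC e a * vecC e x + vecC e x * vecC e a = (-2 * ⟪a, x⟫) • 1 := by
  rw [vecC]
  simp only [sum_mul, mul_sum, smul_mul_assoc, mul_smul_comm, ← sum_add_distrib, ← smul_add,
    gen_mul_vecC_add_vecC_mul he, smul_smul, ← sum_smul, real_inner_eq_sum]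
  congr 1
  exact sum_congr rfl fun i _ => by ring

lemma vecC_mul_self (he : ∀ i j, e i * e j + e j * e i = if i = j then (-2 : A) else 0)
    (a : Vd d) : vecC e a * vecC e a = (-⟪a, a⟫) • 1 := by
  have h : (2 : ℝ) • (vecC e a * vecC e a) = (2 : ℝ) • ((-⟪a, a⟫) • (1 : A)) := by
    rw [two_smul, vecC_mul_add_vecC_mul he, smul_smul]
    ring_nf
  exact smul_right_injective A two_ne_zero h

lemma sum_gen_mul_vecC_mul (he : ∀ i j, e i * e j + e j * e i = if i = j then (-2 : A) else 0)
    (x : Vd d) (g : Fin d → A) :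
    ∑ i, e i * (vecC e x * g i) = -(vecC e x * ∑ i, e i * g i) - (2 : ℝ) • ∑ i, x i • g i := by
  have h : ∀ i, e i * (vecC e x * g i) = -(vecC e x * (e i * g i)) - (2 : ℝ) • x i • g i := by
    intro i
    rw [← mul_assoc, ← mul_assoc, eq_sub_of_add_eq (gen_mul_vecC_add_vecC_mul he i x)]
    rw [sub_mul, smul_mul_assoc, one_mul, smul_smul]
    module
  simp only [h, sum_sub_distrib, sum_neg_distrib, mul_sum, smul_sum]

lemma sum_gen_mul_sum_smul {ι : Type*} (s : Finset ι) (a : ι → Vd d) (c : ι → ℝ) (w : ι → A) :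
    ∑ i, e i * ∑ b ∈ s, (c b * a b i) • w b = ∑ b ∈ s, c b • (vecC e (a b) * w b) := by
  simp only [vecC, mul_sum, sum_mul, mul_smul_comm, smul_mul_assoc, smul_sum, smul_smul]
  rw [sum_comm]

end Clifford

lemma fderiv_vecC_mul (e : Fin d → A) {f : Vd d → A} {x : Vd d} (hf : DifferentiableAt ℝ f x)
    (v : Vd d) :
    fderiv ℝ (fun y => vecC e y * f y) x v = vecC e x * fderiv ℝ f x v + vecC e v * f x := by
  rw [((hasFDerivAt_vecC e x).fun_mul' hf.hasFDerivAt).fderiv]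
  simp [vecCL_apply]

lemma reflect_of_inner_eq_zero {a x : Vd d} (h : ⟪a, x⟫ = 0) : reflect a x = x := by
  simp [reflect, h]

lemma inner_smul_dQuot (a : Vd d) (f : Vd d → A) (x : Vd d) :
    ⟪a, x⟫ • dQuot a f x = f x - f (reflect a x) := by
  unfold dQuot
  split_ifs with h
  · rw [h, reflect_of_inner_eq_zero h, zero_smul, sub_self]
  · rw [smul_smul, mul_inv_cancel₀ h, one_smul]

lemma dQuot_vecC_mul (e : Fin d → A) (a : Vd d) {f : Vd d → A} {x : Vd d}
    (hf : DifferentiableAt ℝ f x) :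
    dQuot a (fun y => vecC e y * f y) x
      = vecC e x * dQuot a f x + (2 / ⟪a, a⟫) • (vecC e a * f (reflect a x)) := by
  unfold dQuot
  split_ifs with h
  · rw [fderiv_vecC_mul e hf, reflect_of_inner_eq_zero h, smul_add, mul_smul_comm]
  · beta_reduce
    rw [vecC_reflect, sub_mul, smul_mul_assoc, mul_smul_comm, mul_sub]
    match_scalars <;> field_simp

lemma dunklT_vecC_mul (e : Fin d → A) (S : DunklData d) (i : Fin d) {f : Vd d → A} {x : Vd d}
    (hf : DifferentiableAt ℝ f x) :
    dunklT S i (fun y => vecC e y * f y) x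
      = e i * f x + vecC e x * dunklT S i f x
        + ∑ a ∈ S.Rp, (S.kap a * a i) • ((2 / ⟪a, a⟫) • (vecC e a * f (reflect a x))) := by
  simp only [dunklT, fderiv_vecC_mul e hf, vecC_single, dQuot_vecC_mul e _ hf, smul_add,
    sum_add_distrib, mul_add, mul_sum, mul_smul_comm]
  abel

lemma sum_coord_smul_dunklT (S : DunklData d) (f : Vd d → A) (x : Vd d) :
    ∑ i, x i • dunklT S i f x = fderiv ℝ f x x + ∑ a ∈ S.Rp, S.kap a • (f x - f (reflect a x)) := by
  have hgrad : ∑ i, x i • fderiv ℝ f x (EuclideanSpace.single i 1) = fderiv ℝ f x x := by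
    simp only [← map_smul, ← map_sum]
    congr 1
    ext j
    simp [Pi.single_apply]
  have hdiff : ∑ i, x i • ∑ a ∈ S.Rp, (S.kap a * a i) • dQuot a f x
      = ∑ a ∈ S.Rp, S.kap a • (f x - f (reflect a x)) := by
    simp only [smul_sum, smul_smul]
    rw [sum_comm]
    refine sum_congr rfl fun a _ => ?_
    rw [← sum_smul, ← inner_smul_dQuot, smul_smul, real_inner_eq_sum, mul_sum]
    congr 1
    exact sum_congr rfl fun i _ => by ring
  simp only [dunklT, smul_add, sum_add_distrib, hgrad, hdiff]

lemma diracD_vecC_mul {e : Fin d → A}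
    (he : ∀ i j, e i * e j + e j * e i = if i = j then (-2 : A) else 0)
    (S : DunklData d) {f : Vd d → A} {x : Vd d} (hf : DifferentiableAt ℝ f x) :
    diracD e S (fun y => vecC e y * f y) x
      = -(dunklDim S) • f x - (2 : ℝ) • fderiv ℝ f x x - vecC e x * diracD e S f x := by
  have hgen : ∑ i, e i * (e i * f x) = -(d : ℝ) • f x := by
    simp [← mul_assoc, gen_mul_self he, Nat.cast_smul_eq_nsmul, nsmul_eq_mul]
  have hroots : ∑ a ∈ S.Rp, S.kap a • (vecC e a * ((2 / ⟪a, a⟫) • (vecC e a * f (reflect a x))))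
      = ∑ a ∈ S.Rp, S.kap a • (-2 : ℝ) • f (reflect a x) := by
    refine sum_congr rfl fun a ha => ?_
    have hN := S.inner_self_ne_zero_of_mem_Rp ha
    rw [mul_smul_comm, ← mul_assoc, vecC_mul_self he, smul_mul_assoc, one_mul, smul_smul,
      smul_smul, smul_smul]
    congr 1
    field_simp
  calc diracD e S (fun y => vecC e y * f y) x
      = ∑ i, e i * (e i * f x) + ∑ i, e i * (vecC e x * dunklT S i f x)
          + ∑ i, e i * ∑ a ∈ S.Rp,
              (S.kap a * a i) • ((2 / ⟪a, a⟫) • (vecC e a * f (reflect a x))) := by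
        simp only [diracD, dunklT_vecC_mul e S _ hf, mul_add, sum_add_distrib]
    _ = -(d : ℝ) • f x + (-(vecC e x * diracD e S f x)
          - (2 : ℝ) • (fderiv ℝ f x x + ∑ a ∈ S.Rp, S.kap a • (f x - f (reflect a x))))
          + ∑ a ∈ S.Rp, S.kap a • (-2 : ℝ) • f (reflect a x) := by
        rw [hgen, sum_gen_mul_vecC_mul he, sum_coord_smul_dunklT, sum_gen_mul_sum_smul, hroots]
        rfl
    _ = _ := by
        simp only [dunklDim, gam, smul_sub, sum_sub_distrib, ← sum_smul, smul_comm _ (-2 : ℝ),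
          ← smul_sum]
        module

lemma fderiv_apply_self_of_homogeneous {E F : Type*} [NormedAddCommGroup E] [NormedSpace ℝ E]
    [NormedAddCommGroup F] [NormedSpace ℝ F] {m : ℕ} {f : E → F} {x : E}
    (hf : DifferentiableAt ℝ f x) (hhom : ∀ (c : ℝ) (y : E), f (c • y) = c ^ m • f y) :
    fderiv ℝ f x x = (m : ℝ) • f x := by
  have hray : HasDerivAt (fun c : ℝ => c • x) x 1 := by
    simpa using (hasDerivAt_id (1 : ℝ)).smul_const x
  have hchain : HasDerivAt (fun c : ℝ => f (c • x)) (fderiv ℝ f x x) 1 := by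
    rw [← one_smul ℝ x] at hf
    simpa [Function.comp_def] using hf.hasFDerivAt.comp_hasDerivAt (1 : ℝ) hray
  have hpow : HasDerivAt (fun c : ℝ => f (c • x)) ((m : ℝ) • f x) 1 := by
    simp_rw [hhom]
    simpa using (hasDerivAt_pow m (1 : ℝ)).smul_const (f x)
  exact hchain.unique hpow

def vecPowCoeff (S : DunklData d) (n k : ℕ) : ℝ :=
  if Even k then -(k : ℝ) else -((k : ℝ) + dunklDim S + 2 * n - 1)

lemma vecPowCoeff_succ (S : DunklData d) (n k : ℕ) :
    vecPowCoeff S n (k + 1) = -dunklDim S - 2 * ((k + n : ℕ) : ℝ) - vecPowCoeff S n k := by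
  rcases Nat.even_or_odd k with hk | hk
  · simp only [vecPowCoeff, Nat.even_add_one, hk, not_true_eq_false, if_true, if_false]
    push_cast
    ring
  · simp only [vecPowCoeff, Nat.even_add_one, Nat.not_even_iff_odd.mpr hk, not_false_eq_true,
      if_true, if_false]
    push_cast
    ring

theorem diracD_vec_pow_mul_general (d : ℕ) (A : Type*) [NormedRing A] [NormedAlgebra ℝ A]
    (e : Fin d → A) (he : CliffordRel e) (S : DunklData d)
    (k n : ℕ) (P : Vd d → A) (hP : ContDiff ℝ (⊤ : ℕ∞) P)
    (hhom : ∀ (c : ℝ) (x : Vd d), P (c • x) = (c ^ n) • P x)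
    (hmono : ∀ x : Vd d, diracD e S P x = 0) :
    ∀ x : Vd d,
      diracD e S (fun y => vecC e y ^ k * P y) x
        = (if Even k then -(k : ℝ)
            else -((k : ℝ) + dunklDim S + 2 * n - 1)) • (vecC e x ^ (k - 1) * P x) := by
  change ∀ x, _ = vecPowCoeff S n k • _
  induction k with
  | zero => simpa [vecPowCoeff] using hmono
  | succ k ih =>
    intro x
    have hdiff : DifferentiableAt ℝ (fun y => vecC e y ^ k * P y) x :=
      ((hasFDerivAt_vecC e x).differentiableAt.pow k).mul (hP.differentiable (by simp) x)
    have heuler : fderiv ℝ (fun y => vecC e y ^ k * P y) x x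
        = ((k + n : ℕ) : ℝ) • (vecC e x ^ k * P x) :=
      fderiv_apply_self_of_homogeneous hdiff fun t y => by
        rw [vecC_smul, smul_pow, hhom, smul_mul_smul_comm, pow_add]
    have hshift : vecC e x * (vecPowCoeff S n k • (vecC e x ^ (k - 1) * P x))
        = vecPowCoeff S n k • (vecC e x ^ k * P x) := by
      rcases k with _ | k
      · simp [vecPowCoeff]
      · rw [mul_smul_comm, ← mul_assoc, ← pow_succ', Nat.add_sub_cancel]
    simp_rw [pow_succ', mul_assoc]
    rw [diracD_vecC_mul he.1 S hdiff, heuler, ih, hshift, vecPowCoeff_succ, Nat.add_sub_cancel]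
    module

/-- Lemma 2.1: for a homogeneous Dunkl-monogenic polynomial `P_n` of degree `n`,
`D̲(x̲^k P_n) = −k x̲^{k−1} P_n` for even `k`, and
`D̲(x̲^k P_n) = −(k + μ + 2n − 1) x̲^{k−1} P_n` for odd `k`. -/
theorem diracD_vec_pow_mul (d : ℕ) (A : Type*) [NormedRing A] [NormedAlgebra ℝ A]
    (e : Fin d → A) (he : CliffordRel e) (S : DunklData d) (hγ : 0 < gam S)
    (k n : ℕ) (P : Vd d → A) (hP : ContDiff ℝ (⊤ : ℕ∞) P)
    (hhom : ∀ (c : ℝ) (x : Vd d), P (c • x) = (c ^ n) • P x)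
    (hmono : ∀ x : Vd d, diracD e S P x = 0) :
    ∀ x : Vd d,
      diracD e S (fun y => vecC e y ^ k * P y) x
        = (if Even k then -(k : ℝ)
            else -((k : ℝ) + dunklDim S + 2 * n - 1)) • (vecC e x ^ (k - 1) * P x) :=
  diracD_vec_pow_mul_general d A e he S k n P hP hhom hmono
end
end
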